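/- arXiv:2403.20299 — 3 statements merged into one kernel-verified Lean document; each statement's English description precedes it below -/
import Mathlib

section
/- With (Y,η) = ({0,1}^ℕ × ℤ, Bernoulli(1/2)^ℕ × counting measure) and β_n as above: for N ∈ ℕ, cylinder sets C_0, C_1 ⊂ {0,1}^ℕ depending only on the first N coordinates, and B_0, B_1 ⊂ [−N,N] ∩ ℤ, if n > 2N then ⟨U_{β_n}(1_{C_0 × B_0}), 1_{C_1 × B_1}⟩ = (1/2)⟨1_{C_0 × B_0}, 1_{C_1 × B_1}⟩. -/
open MeasureTheory ENNReal

lemma half_key (μ : Measure (ℕ → Bool))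
    (hμ : ∀ (S : Finset ℕ) (a : ℕ → Bool),
      μ {x | ∀ i ∈ S, x i = a i} = (1 / 2 : ℝ≥0∞) ^ S.card)
    (N n : ℕ) (hn : N ≤ n) (C : Set (ℕ → Bool))
    (hC : ∀ x y : ℕ → Bool, (∀ i < N, x i = y i) → (x ∈ C ↔ y ∈ C)) :
    μ (C ∩ {x | x n = true}) = (1 / 2 : ℝ≥0∞) * μ C := by
  classical
  set e : (Fin N → Bool) → (ℕ → Bool) :=
    fun a i => if h : i < N then a ⟨i, h⟩ else true with he
  set D : (Fin N → Bool) → Set (ℕ → Bool) := fun a => {x | ∀ i < N, x i = e a i} with hD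
  have heD : ∀ a (x : ℕ → Bool), x ∈ D a ↔ ∀ i : Fin N, x i = a i := by
    intro a x
    constructor
    · intro h i
      have := h i i.isLt
      simpa [he, i.isLt] using this
    · intro h i hi
      simpa [he, hi] using h ⟨i, hi⟩
  -- D a as a cylinder over range N
  have hDcyl : ∀ a, D a = {x | ∀ i ∈ Finset.range N, x i = e a i} := by
    intro a; ext x; simp [hD, Finset.mem_range]
  have hDmeas : ∀ a, MeasurableSet (D a) := by
    intro a
    have : D a = ⋂ i ∈ Finset.range N, (fun x : ℕ → Bool => x i) ⁻¹' {e a i} := by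
      ext x; simp [hD, Finset.mem_range]
    rw [this]
    exact MeasurableSet.biInter (Finset.range N).countable_toSet
      (fun i _ => (measurable_pi_apply i) (measurableSet_singleton _))
  have hμD : ∀ a, μ (D a) = (1 / 2 : ℝ≥0∞) ^ N := by
    intro a; rw [hDcyl a, hμ (Finset.range N) (e a)]; simp
  -- the finset of patterns whose cylinders are inside C
  set F : Finset (Fin N → Bool) := Finset.univ.filter (fun a => e a ∈ C) with hF
  have hmemD : ∀ x a, x ∈ D a → (x ∈ C ↔ e a ∈ C) := by
    intro x a hx
    exact hC x (e a) (fun i hi => (heD a x).1 hx ⟨i, hi⟩ |>.trans (by simp [he, hi]))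
  have hCun : C = ⋃ a ∈ F, D a := by
    ext x
    constructor
    · intro hx
      refine Set.mem_biUnion (show (fun i : Fin N => x i) ∈ F from ?_) ((heD _ x).2 fun i => rfl)
      simp only [hF, Finset.mem_filter, Finset.mem_univ, true_and]
      exact ((hmemD x _ ((heD _ x).2 fun i => rfl)).1 hx)
    · intro hx
      obtain ⟨a, ha, hxa⟩ := Set.mem_iUnion₂.1 hx
      have haC : e a ∈ C := by simpa [hF] using ha
      exact (hmemD x a hxa).2 haC
  have hdisj : (↑F : Set (Fin N → Bool)).PairwiseDisjoint D := by
    intro a _ b _ hab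
    refine Set.disjoint_left.2 fun x hxa hxb => hab ?_
    funext i
    exact ((heD a x).1 hxa i).symm.trans ((heD b x).1 hxb i)
  -- intersected cylinders
  have hDT : ∀ a, μ (D a ∩ {x | x n = true}) = (1 / 2 : ℝ≥0∞) * μ (D a) := by
    intro a
    set g : ℕ → Bool := fun i => if i = n then true else e a i with hg
    have hset : D a ∩ {x | x n = true} = {x | ∀ i ∈ insert n (Finset.range N), x i = g i} := by
      ext x
      simp only [Set.mem_inter_iff, Set.mem_setOf_eq, Finset.mem_insert, Finset.mem_range, hD]
      constructor
      · rintro ⟨h1, h2⟩ i hi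
        rcases hi with rfl | hi
        · simpa [hg] using h2
        · have hne : i ≠ n := by omega
          simpa [hg, hne] using h1 i hi
      · intro h
        refine ⟨fun i hi => ?_, ?_⟩
        · have hne : i ≠ n := by omega
          simpa [hg, hne] using h i (Or.inr hi)
        · simpa [hg] using h n (Or.inl rfl)
    have hcard : (insert n (Finset.range N)).card = N + 1 := by
      rw [Finset.card_insert_of_notMem (by simp; omega)]
      simp
    rw [hset, hμ _ g, hcard, hμD a, pow_succ, mul_comm]
  rw [hCun, Set.iUnion₂_inter]
  have hdisj' : (↑F : Set (Fin N → Bool)).PairwiseDisjoint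
      (fun a => D a ∩ {x | x n = true}) := by
    intro a ha b hb hab
    exact (hdisj ha hb hab).mono Set.inter_subset_left Set.inter_subset_left
  rw [measure_biUnion_finset hdisj'
    (fun a _ => (hDmeas a).inter (show MeasurableSet {x : ℕ → Bool | x n = true} by
      have : {x : ℕ → Bool | x n = true} = (fun x : ℕ → Bool => x n) ⁻¹' {true} := rfl
      rw [this]; exact measurable_pi_apply n (measurableSet_singleton true))),
    measure_biUnion_finset hdisj (fun a _ => hDmeas a)]
  rw [Finset.mul_sum]
  exact Finset.sum_congr rfl fun a _ => hDT a

instance : SFinite (Measure.count : Measure ℤ) := by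
  have h : (Measure.count : Measure ℤ) = Measure.sum Measure.dirac := rfl
  rw [h]; infer_instance

/-- With `(Y, η) = ({0,1}^ℕ × ℤ, Bernoulli(1/2)^ℕ × counting measure)` and
`β_n(x,k) = (x, k+n)` if `x_n = 0`, `(x,k)` if `x_n = 1`: for `N ∈ ℕ`, cylinder sets
`C₀, C₁ ⊆ {0,1}^ℕ` depending only on the first `N` coordinates and `B₀, B₁ ⊆ [-N, N] ∩ ℤ`,
if `n > 2N` then `⟨U_{β_n} 1_{C₀ × B₀}, 1_{C₁ × B₁}⟩ = (1/2) ⟨1_{C₀ × B₀}, 1_{C₁ × B₁}⟩`,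
where `U_{β_n} ξ = ξ ∘ β_n⁻¹`. -/
theorem inner_indicator_cylinder_eq_half
    (μ : Measure (ℕ → Bool)) [IsProbabilityMeasure μ]
    (hμ : ∀ (S : Finset ℕ) (a : ℕ → Bool),
      μ {x | ∀ i ∈ S, x i = a i} = (1 / 2 : ℝ≥0∞) ^ S.card)
    (βinv : ℕ → (ℕ → Bool) × ℤ → (ℕ → Bool) × ℤ)
    (hβinv : ∀ n x (k : ℤ), βinv n (x, k) = if x n = false then (x, k - (n : ℤ)) else (x, k))
    (N : ℕ) (C₀ C₁ : Set (ℕ → Bool)) (hC₀m : MeasurableSet C₀) (hC₁m : MeasurableSet C₁)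
    (hC₀ : ∀ x y : ℕ → Bool, (∀ i < N, x i = y i) → (x ∈ C₀ ↔ y ∈ C₀))
    (hC₁ : ∀ x y : ℕ → Bool, (∀ i < N, x i = y i) → (x ∈ C₁ ↔ y ∈ C₁))
    (B₀ B₁ : Set ℤ) (hB₀ : B₀ ⊆ Set.Icc (-(N : ℤ)) (N : ℤ)) (hB₁ : B₁ ⊆ Set.Icc (-(N : ℤ)) (N : ℤ))
    (n : ℕ) (hn : 2 * N < n) :
    ∫ y, Set.indicator (C₀ ×ˢ B₀) (fun _ => (1 : ℝ)) (βinv n y) *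
        Set.indicator (C₁ ×ˢ B₁) (fun _ => (1 : ℝ)) y ∂(μ.prod Measure.count) =
      (1 / 2) * ∫ y, Set.indicator (C₀ ×ˢ B₀) (fun _ => (1 : ℝ)) y *
        Set.indicator (C₁ ×ˢ B₁) (fun _ => (1 : ℝ)) y ∂(μ.prod Measure.count) := by
  classical
  set T : Set (ℕ → Bool) := {x | x n = true} with hT
  have hTm : MeasurableSet T := by
    have : T = (fun x : ℕ → Bool => x n) ⁻¹' {true} := rfl
    rw [this]; exact measurable_pi_apply n (measurableSet_singleton true)
  have hBm : ∀ (B : Set ℤ), MeasurableSet B := fun B => trivial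
  have h1 : ∀ y : (ℕ → Bool) × ℤ,
      Set.indicator (C₀ ×ˢ B₀) (fun _ => (1 : ℝ)) (βinv n y) *
        Set.indicator (C₁ ×ˢ B₁) (fun _ => (1 : ℝ)) y =
      Set.indicator (((C₀ ∩ C₁) ∩ T) ×ˢ (B₀ ∩ B₁)) (fun _ => (1 : ℝ)) y := by
    rintro ⟨x, k⟩
    rw [hβinv n x k]
    by_cases hx : x n = false
    · rw [if_pos hx]
      have hk2 : ¬(k - (n : ℤ) ∈ B₀ ∧ k ∈ B₁) := by
        rintro ⟨h2, h1⟩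
        have := (hB₁ h1).2
        have := (hB₀ h2).1
        omega
      have hx' : x n ≠ true := by simp [hx]
      simp only [Set.indicator_apply, Set.mem_prod, Set.mem_inter_iff, hT, Set.mem_setOf_eq]
      split_ifs <;> norm_num <;> tauto
    · rw [if_neg hx]
      have hx' : x n = true := by simpa using hx
      simp only [Set.indicator_apply, Set.mem_prod, Set.mem_inter_iff, hT, Set.mem_setOf_eq, hx']
      split_ifs <;> norm_num <;> tauto
  have h2 : ∀ y : (ℕ → Bool) × ℤ,
      Set.indicator (C₀ ×ˢ B₀) (fun _ => (1 : ℝ)) y *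
        Set.indicator (C₁ ×ˢ B₁) (fun _ => (1 : ℝ)) y =
      Set.indicator ((C₀ ∩ C₁) ×ˢ (B₀ ∩ B₁)) (fun _ => (1 : ℝ)) y := by
    intro y
    rw [← Set.prod_inter_prod, ← Set.inter_indicator_mul]
    simp
  simp only [h1, h2]
  rw [integral_indicator_const _ (((hC₀m.inter hC₁m).inter hTm).prod (hBm _)),
      integral_indicator_const _ ((hC₀m.inter hC₁m).prod (hBm _))]
  rw [measureReal_def, measureReal_def, Measure.prod_prod, Measure.prod_prod]
  have hkey := half_key μ hμ N n (by omega) (C₀ ∩ C₁)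
    (fun x y h => by rw [Set.mem_inter_iff, Set.mem_inter_iff, hC₀ x y h, hC₁ x y h])
  rw [hkey]
  simp only [smul_eq_mul, mul_one]
  rw [mul_assoc, ENNReal.toReal_mul]
  norm_num
end

section
/- Let K be a compact second countable group with Haar probability measure λ, and let α be a measure-preserving automorphism of (K,λ) such that α(xy) = α(x)α(y) for almost every (x,y) ∈ K × K. Then there exists a unique continuous group automorphism β of K such that α(x) = β(x) for almost every x ∈ K. -/
open MeasureTheory Set Function Filter
open scoped Pointwise Topology ENNReal

section Aux

variable {K : Type*} [Group K] [TopologicalSpace K] [IsTopologicalGroup K]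
    [CompactSpace K] [SecondCountableTopology K]
    [MeasurableSpace K] [BorelSpace K]

/-- Haar probability measure on a compact group is inversion invariant. -/
private lemma aux_inv_eq (lam : Measure K) [lam.IsHaarMeasure] [IsProbabilityMeasure lam] :
    lam.inv = lam := by
  have hprob : IsProbabilityMeasure lam.inv := by
    constructor
    rw [Measure.inv_apply, Set.inv_univ, measure_univ]
  refine Measure.ext fun A hA => ?_
  have hf : Measurable (fun p : K × K => A.indicator (fun _ => (1 : ℝ≥0∞)) (p.2 * p.1)) :=
    (measurable_const.indicator hA).comp (measurable_snd.mul measurable_fst)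
  have hswap := lintegral_lintegral_swap (μ := lam) (ν := lam.inv)
    (f := fun x y => A.indicator (fun _ => (1 : ℝ≥0∞)) (y * x)) hf.aemeasurable
  have hL : ∀ x : K, ∫⁻ y, A.indicator (fun _ => (1 : ℝ≥0∞)) (y * x) ∂lam.inv = lam.inv A := by
    intro x
    have : (fun y : K => A.indicator (fun _ => (1 : ℝ≥0∞)) (y * x))
        = ((fun y : K => y * x) ⁻¹' A).indicator (fun _ => (1 : ℝ≥0∞)) := by
      funext y
      by_cases h : y * x ∈ A <;> simp [Set.indicator_apply, Set.mem_preimage, h]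
    rw [this]
    exact (lintegral_indicator_one (measurable_mul_const x hA)).trans
      (measure_preimage_mul_right lam.inv x A)
  have hR : ∀ y : K, ∫⁻ x, A.indicator (fun _ => (1 : ℝ≥0∞)) (y * x) ∂lam = lam A := by
    intro y
    have : (fun x : K => A.indicator (fun _ => (1 : ℝ≥0∞)) (y * x))
        = ((fun x : K => y * x) ⁻¹' A).indicator (fun _ => (1 : ℝ≥0∞)) := by
      funext x
      by_cases h : y * x ∈ A <;> simp [Set.indicator_apply, Set.mem_preimage, h]
    rw [this]
    exact (lintegral_indicator_one (measurable_const_mul y hA)).trans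
      (measure_preimage_mul lam y A)
  simp only [hL, hR] at hswap
  simpa using hswap

private lemma aux_hom_eq (lam : Measure K) [lam.IsHaarMeasure] [IsProbabilityMeasure lam]
    (f g : K → K) (hf : ∀ a b, f (a * b) = f a * f b) (hg : ∀ a b, g (a * b) = g a * g b)
    (h : ∀ᵐ z ∂lam, f z = g z) : ∀ x, f x = g x := by
  haveI : (MeasureTheory.ae lam).NeBot :=
    IsProbabilityMeasure.ae_neBot
  intro x
  have h2 : ∀ᵐ z ∂lam, f (x * z) = g (x * z) :=
    (measurePreserving_mul_left lam x).quasiMeasurePreserving.ae h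
  obtain ⟨z, h1, h2⟩ := (h.and h2).exists
  rw [hf, hg, h1] at h2
  exact mul_right_cancel h2

private lemma aux_exists (lam : Measure K) [lam.IsHaarMeasure] [IsProbabilityMeasure lam]
    (α : K → K) (hα : MeasurePreserving α lam lam)
    (hmul : ∀ᵐ p ∂(lam.prod lam), α (p.1 * p.2) = α p.1 * α p.2) :
    ∃ β : K → K, (∀ a b, β (a * b) = β a * β b) ∧ (∀ᵐ x ∂lam, α x = β x) := by
  haveI : lam.IsInvInvariant := ⟨aux_inv_eq lam⟩
  haveI : lam.IsMulRightInvariant :=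
    aux_inv_eq lam ▸ (inferInstance : lam.inv.IsMulRightInvariant)
  haveI : (MeasureTheory.ae lam).NeBot :=
    IsProbabilityMeasure.ae_neBot
  have hG : ∀ᵐ g ∂lam, ∀ᵐ y ∂lam, α (g * y) = α g * α y :=
    Measure.ae_ae_of_ae_prod hmul
  have hkey : ∀ x : K, ∃ c : K, ∀ᵐ y ∂lam, α (x * y) = c * α y := by
    intro x
    have hT : MeasurePreserving (fun z : K => z⁻¹ * x) lam lam :=
      (measurePreserving_mul_right lam x).comp (Measure.measurePreserving_inv lam)
    have h2 : ∀ᵐ z ∂lam, ∀ᵐ y ∂lam, α (z⁻¹ * x * y) = α (z⁻¹ * x) * α y :=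
      hT.quasiMeasurePreserving.ae hG
    obtain ⟨z, hz1, hz2⟩ := (hG.and h2).exists
    refine ⟨α z * α (z⁻¹ * x), ?_⟩
    have h3 : ∀ᵐ y ∂lam, α (z * (z⁻¹ * x * y)) = α z * α (z⁻¹ * x * y) :=
      (measurePreserving_mul_left lam (z⁻¹ * x)).quasiMeasurePreserving.ae hz1
    filter_upwards [h3, hz2] with y e3 e2
    have hxy : z * (z⁻¹ * x * y) = x * y := by group
    rw [hxy] at e3
    rw [e3, e2, mul_assoc]
  choose β hβ using hkey
  have hc : ∀ x c, (∀ᵐ y ∂lam, α (x * y) = c * α y) → c = β x := by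
    intro x c hcp
    obtain ⟨y, h1, h2⟩ := (hcp.and (hβ x)).exists
    exact mul_right_cancel (h1.symm.trans h2)
  have hβmul : ∀ a b, β (a * b) = β a * β b := by
    intro a b
    refine (hc (a * b) (β a * β b) ?_).symm
    have h1 : ∀ᵐ y ∂lam, α (a * (b * y)) = β a * α (b * y) :=
      (measurePreserving_mul_left lam b).quasiMeasurePreserving.ae (hβ a)
    filter_upwards [h1, hβ b] with y e1 e2
    rw [mul_assoc, e1, e2, ← mul_assoc]
  have hae : ∀ᵐ x ∂lam, α x = β x := by
    filter_upwards [hG] with x hx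
    obtain ⟨y, h1, h2⟩ := (hx.and (hβ x)).exists
    exact mul_right_cancel (h1.symm.trans h2)
  exact ⟨β, hβmul, hae⟩

end Aux

/-- Let `K` be a compact second countable group with Haar probability measure `λ`, and let `α`
be a measure-preserving automorphism of `(K, λ)` such that `α (x * y) = α x * α y` for almost
every `(x, y) ∈ K × K`. Then there is a unique continuous group automorphism `β` of `K` with
`α x = β x` for almost every `x ∈ K`. -/
theorem ae_multiplicative_is_ae_continuous_automorphism
    {K : Type*} [Group K] [TopologicalSpace K] [IsTopologicalGroup K]
    [CompactSpace K] [SecondCountableTopology K]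
    [MeasurableSpace K] [BorelSpace K]
    (lam : Measure K) [lam.IsHaarMeasure] [IsProbabilityMeasure lam]
    (α α' : K → K)
    (hα : MeasurePreserving α lam lam) (hα' : MeasurePreserving α' lam lam)
    (hinv₁ : ∀ᵐ x ∂lam, α' (α x) = x) (hinv₂ : ∀ᵐ x ∂lam, α (α' x) = x)
    (hmul : ∀ᵐ p ∂(lam.prod lam), α (p.1 * p.2) = α p.1 * α p.2) :
    ∃! β : K ≃* K, Continuous β ∧ ∀ᵐ x ∂lam, α x = β x := by
  haveI : lam.IsInvInvariant := ⟨aux_inv_eq lam⟩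
  -- `α'` is also a.e. multiplicative
  have hmul' : ∀ᵐ p ∂(lam.prod lam), α' (p.1 * p.2) = α' p.1 * α' p.2 := by
    have h2 : ∀ᵐ p ∂(lam.prod lam), α (α' p.1) = p.1 :=
      Measure.quasiMeasurePreserving_fst.ae hinv₂
    have h3 : ∀ᵐ p ∂(lam.prod lam), α (α' p.2) = p.2 :=
      Measure.quasiMeasurePreserving_snd.ae hinv₂
    have h1 : ∀ᵐ p ∂(lam.prod lam), α (α' p.1 * α' p.2) = α (α' p.1) * α (α' p.2) :=
      (hα'.prod hα').quasiMeasurePreserving.ae hmul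
    have qmp_mul : Measure.QuasiMeasurePreserving (fun p : K × K => p.1 * p.2)
        (lam.prod lam) lam :=
      Measure.quasiMeasurePreserving_snd.comp
        (measurePreserving_prod_mul lam lam).quasiMeasurePreserving
    have h4 : ∀ᵐ p ∂(lam.prod lam), α' (α (α' p.1 * α' p.2)) = α' p.1 * α' p.2 :=
      (qmp_mul.comp (hα'.prod hα').quasiMeasurePreserving).ae hinv₁
    filter_upwards [h1, h2, h3, h4] with p e1 e2 e3 e4
    calc α' (p.1 * p.2) = α' (α (α' p.1) * α (α' p.2)) := by rw [e2, e3]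
      _ = α' (α (α' p.1 * α' p.2)) := by rw [e1]
      _ = α' p.1 * α' p.2 := e4
  obtain ⟨b, hbmul, hb⟩ := aux_exists lam α hα hmul
  obtain ⟨b', hbmul', hb'⟩ := aux_exists lam α' hα' hmul'
  -- `b'` is a two-sided inverse of `b`
  have hli : ∀ x, b' (b x) = x := by
    refine aux_hom_eq lam (fun x => b' (b x)) id
      (fun u v => by show b' (b (u * v)) = b' (b u) * b' (b v); rw [hbmul, hbmul']) (fun _ _ => rfl) ?_
    have e1 : ∀ᵐ x ∂lam, α' (α x) = b' (α x) :=
      hα.quasiMeasurePreserving.ae hb'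
    filter_upwards [hb, hinv₁, e1] with x hx h1 he
    show b' (b x) = x
    rw [← hx, ← he, h1]
  have hri : ∀ x, b (b' x) = x := by
    refine aux_hom_eq lam (fun x => b (b' x)) id
      (fun u v => by show b (b' (u * v)) = b (b' u) * b (b' v); rw [hbmul', hbmul]) (fun _ _ => rfl) ?_
    have e1 : ∀ᵐ x ∂lam, α (α' x) = b (α' x) :=
      hα'.quasiMeasurePreserving.ae hb
    filter_upwards [hb', hinv₂, e1] with x hx h1 he
    show b (b' x) = x
    rw [← hx, ← he, h1]
  let β : K ≃* K := ⟨⟨b, b', hli, hri⟩, fun a c => hbmul a c⟩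
  -- continuity
  have hcont : Continuous β := by
    refine continuous_of_continuousAt_one β ?_
    rw [ContinuousAt, map_one, Filter.tendsto_def]
    intro V hV
    have hdivc : ContinuousAt (fun p : K × K => p.1⁻¹ * p.2) (1, 1) :=
      (continuous_fst.inv.mul continuous_snd).continuousAt
    have hVp : (fun p : K × K => p.1⁻¹ * p.2) ⁻¹' V ∈ 𝓝 ((1 : K), (1 : K)) :=
      hdivc (by simpa using hV)
    rw [nhds_prod_eq] at hVp
    obtain ⟨W₁, hW₁, W₂, hW₂, hW⟩ := Filter.mem_prod_iff.1 hVp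
    obtain ⟨U, hUsub, hUopen, hU1⟩ := mem_nhds_iff.1 (Filter.inter_mem hW₁ hW₂)
    have hUV : ∀ u ∈ U, ∀ v ∈ U, u⁻¹ * v ∈ V := by
      intro u hu v hv
      have := hW (Set.mk_mem_prod (hUsub hu).1 (hUsub hv).2)
      simpa using this
    -- cover K by finitely many translates of U
    obtain ⟨t, ht⟩ := IsCompact.elim_finite_subcover isCompact_univ
      (fun c : K => (fun x => c * x) '' U)
      (fun c => (Homeomorph.mulLeft c).isOpenMap U hUopen)
      (fun x _ => Set.mem_iUnion.2 ⟨x, ⟨1, hU1, mul_one x⟩⟩)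
    set N := toMeasurable lam {x | ¬ α x = b x} with hNdef
    have hN : lam N = 0 := by
      rw [measure_toMeasurable]
      exact hb
    have hex : ∃ c ∈ t, 0 < lam (α ⁻¹' ((fun x => c * x) '' U) \ N) := by
      by_contra hcon
      push_neg at hcon
      have hz : lam (⋃ c ∈ t, (α ⁻¹' ((fun x => c * x) '' U) \ N)) = 0 :=
        (measure_biUnion_null_iff t.countable_toSet).2 fun c hc =>
          le_antisymm (hcon c hc) zero_le
      have hsup : univ \ N ⊆ ⋃ c ∈ t, (α ⁻¹' ((fun x => c * x) '' U) \ N) := by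
        intro x hx
        obtain ⟨c, hc⟩ := Set.mem_iUnion.1 (ht (Set.mem_univ (α x)))
        obtain ⟨hct, hmem⟩ := Set.mem_iUnion.1 hc
        exact Set.mem_biUnion hct ⟨hmem, hx.2⟩
      have h1 : lam (univ \ N) = 1 := by
        rw [measure_diff_null hN]
        exact measure_univ
      have := (measure_mono hsup).trans_eq hz
      rw [h1] at this
      exact one_ne_zero (le_antisymm this zero_le)
    obtain ⟨c, hct, hcpos⟩ := hex
    set E := α ⁻¹' ((fun x => c * x) '' U) \ N with hEdef
    have hEm : MeasurableSet E :=
      (hα.measurable ((Homeomorph.mulLeft c).isOpenMap U hUopen).measurableSet).diff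
        (measurableSet_toMeasurable _ _)
    have hdiv : E⁻¹ / E⁻¹ ∈ 𝓝 (1 : K) := by
      refine Measure.div_mem_nhds_one_of_haar_pos lam E⁻¹ hEm.inv ?_
      rwa [Measure.measure_inv]
    refine Filter.mem_of_superset hdiv ?_
    rintro w hw
    rw [Set.mem_div] at hw
    obtain ⟨p, hp, q, hq, rfl⟩ := hw
    rw [Set.mem_inv] at hp hq
    -- p⁻¹, q⁻¹ ∈ E
    have hb1 : b 1 = 1 := by
      have h := hbmul 1 1
      rw [mul_one] at h
      exact (mul_left_cancel (a := b 1) (by rw [mul_one]; exact h)).symm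
    have hbinv : ∀ x : K, b x⁻¹ = (b x)⁻¹ := by
      intro x
      have h := hbmul x x⁻¹
      rw [mul_inv_cancel, hb1] at h
      exact eq_inv_of_mul_eq_one_right h.symm
    have hEprop : ∀ e ∈ E, ∃ u ∈ U, b e = c * u := by
      intro e he
      have hae : α e = b e := by
        by_contra hne
        exact he.2 (subset_toMeasurable lam _ hne)
      obtain ⟨u, hu, hue⟩ := he.1
      exact ⟨u, hu, by rw [← hae]; exact hue.symm⟩
    obtain ⟨u₁, hu₁, he₁⟩ := hEprop p⁻¹ hp
    obtain ⟨u₂, hu₂, he₂⟩ := hEprop q⁻¹ hq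
    have hp' : b p = (c * u₁)⁻¹ := by
      have h : (b p)⁻¹ = c * u₁ := by rw [← hbinv p]; exact he₁
      rw [← h, inv_inv]
    have key : b (p / q) = u₁⁻¹ * u₂ := by
      calc b (p / q) = b (p * q⁻¹) := by rw [div_eq_mul_inv]
        _ = b p * b q⁻¹ := hbmul _ _
        _ = (c * u₁)⁻¹ * (c * u₂) := by rw [hp', he₂]
        _ = u₁⁻¹ * u₂ := by group
    show b (p / q) ∈ V
    rw [key]
    exact hUV u₁ hu₁ u₂ hu₂
  refine ⟨β, ⟨hcont, hb⟩, ?_⟩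
  rintro γ ⟨hγc, hγae⟩
  have hgb : ∀ x, (γ : K → K) x = b x :=
    aux_hom_eq lam γ b (map_mul γ) hbmul
      ((hγae.and hb).mono fun x hx => hx.1 ▸ hx.2)
  exact MulEquiv.ext fun x => hgb x
end

section
/- Let H₀ be a Hilbert space with unit vector 1 ∈ H₀, H = ⨂_{n∈ℕ} H₀ the infinite tensor product with respect to 1, and for each finite F ⊂ ℕ let H_F = ⨂_{i∈F}(H₀ ⊖ ℂ1) (tensored with 1 outside F). Let (U_n) be unitaries on H₀ fixing 1 and converging weakly to P_{ℂ1} + (1/2)P_{(ℂ1)^⊥}. Then the diagonal unitaries ⨂_ℕ U_n on H converge weakly to Σ_{k≥0} 2^{−k} P_{L_k}, where L_k = ⨁_{|F|=k} H_F. -/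
open Filter

set_option maxHeartbeats 2000000

/-- Let `H₀` be a Hilbert space with a unit vector `e` ("the vector `1`"), and let `H` be the
infinite tensor product `⨂_{n ∈ ℕ} H₀` with respect to `e`. We axiomatize this by a map
`ι : (ℕ → H₀) → H`, defined on the set `D` of sequences equal to `e` in all but finitely many
coordinates (the elementary tensors), with `⟨ι x, ι y⟩ = ∏ᵢ ⟨x i, y i⟩` and total range.
For a finite set `F ⊆ ℕ`, `H_F = ⨂_{i ∈ F} (H₀ ⊖ ℂe)` (tensored with `e` outside `F`) and
`L k = ⨁_{|F| = k} H_F`. If `U n` are unitaries of `H₀` fixing `e` and converging weakly to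
`P_{ℂe} + (1/2) P_{(ℂe)^⊥}`, then the diagonal unitaries `V n = ⨂_ℕ U n` converge weakly to
`Σ_{k ≥ 0} 2^{-k} P_{L_k}`, i.e. to the bounded operator `T` acting as `2^{-k}` on each `L k`. -/
theorem diagonal_unitaries_weak_limit
    {H₀ H : Type*} [NormedAddCommGroup H₀] [InnerProductSpace ℂ H₀]
    [NormedAddCommGroup H] [InnerProductSpace ℂ H] [CompleteSpace H]
    (e : H₀) (he : ‖e‖ = 1)
    (D : Set (ℕ → H₀)) (hD : D = {x : ℕ → H₀ | {i : ℕ | x i ≠ e}.Finite})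
    (ι : (ℕ → H₀) → H)
    (hinner : ∀ x ∈ D, ∀ y ∈ D, ∀ S : Finset ℕ,
      {i : ℕ | x i ≠ e} ⊆ S → {i : ℕ | y i ≠ e} ⊆ S →
      (inner ℂ (ι x) (ι y) : ℂ) = ∏ i ∈ S, (inner ℂ (x i) (y i) : ℂ))
    (htotal : (Submodule.span ℂ (ι '' D)).topologicalClosure = ⊤)
    (U : ℕ → (H₀ ≃ₗᵢ[ℂ] H₀)) (hUe : ∀ n, U n e = e)
    (hUweak : ∀ ξ ζ : H₀, Tendsto (fun n => (inner ℂ (U n ξ) ζ : ℂ)) atTop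
      (nhds ((1 / 2) * (inner ℂ ξ ζ : ℂ) + (1 / 2) * ((inner ℂ ξ e : ℂ) * (inner ℂ e ζ : ℂ)))))
    (V : ℕ → (H ≃ₗᵢ[ℂ] H))
    (hV : ∀ n, ∀ x ∈ D, V n (ι x) = ι fun i => U n (x i))
    (L : ℕ → Submodule ℂ H)
    (hL : ∀ k, L k = (Submodule.span ℂ
      (⋃ F ∈ {F : Finset ℕ | F.card = k},
        ι '' {x ∈ D | (∀ i ∉ F, x i = e) ∧ ∀ i ∈ F, (inner ℂ e (x i) : ℂ) = 0})).topologicalClosure) :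
    ∃ T : H →L[ℂ] H,
      (∀ k : ℕ, ∀ ξ ∈ L k, T ξ = ((2 : ℂ) ^ k)⁻¹ • ξ) ∧
      ∀ ξ ζ : H, Tendsto (fun n => (inner ℂ (V n ξ) ζ : ℂ)) atTop (nhds (inner ℂ (T ξ) ζ : ℂ)) := by
  classical
  set s := Submodule.span ℂ (ι '' D) with hs
  have hdense : Dense (s : Set H) :=
    Submodule.dense_iff_topologicalClosure_eq_top.mpr htotal
  have hmemD : ∀ x : ℕ → H₀, x ∈ D ↔ {i : ℕ | x i ≠ e}.Finite := by
    intro x; rw [hD]; rfl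
  -- the pointwise limit factor
  set ℓ : (ℕ → H₀) → (ℕ → H₀) → ℕ → ℂ := fun x y i =>
    (1 / 2) * (inner ℂ (x i) (y i) : ℂ) + (1 / 2) * ((inner ℂ (x i) e : ℂ) * (inner ℂ e (y i) : ℂ))
    with hℓ
  -- Step 1: convergence on elementary tensors
  have helem : ∀ x ∈ D, ∀ y ∈ D, ∀ S : Finset ℕ,
      {i : ℕ | x i ≠ e} ⊆ S → {i : ℕ | y i ≠ e} ⊆ S →
      Tendsto (fun n => (inner ℂ (V n (ι x)) (ι y) : ℂ)) atTop (nhds (∏ i ∈ S, ℓ x y i)) := by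
    intro x hx y hy S hxS hyS
    have hUxD : ∀ n, (fun i => U n (x i)) ∈ D := by
      intro n
      rw [hmemD]
      refine Set.Finite.subset ((hmemD x).mp hx) ?_
      intro i hi
      simp only [Set.mem_setOf_eq] at hi ⊢
      intro hxe
      exact hi (by rw [hxe, hUe])
    have hUxS : ∀ n, {i : ℕ | U n (x i) ≠ e} ⊆ (S : Set ℕ) := by
      intro n i hi
      refine hxS ?_
      simp only [Set.mem_setOf_eq] at hi ⊢
      intro hxe
      exact hi (by rw [hxe, hUe])
    have key : ∀ n, (inner ℂ (V n (ι x)) (ι y) : ℂ) = ∏ i ∈ S, (inner ℂ (U n (x i)) (y i) : ℂ) := by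
      intro n
      rw [hV n x hx]
      exact hinner _ (hUxD n) y hy S (hUxS n) hyS
    simp only [key]
    exact tendsto_finset_prod S (fun i _ => hUweak (x i) (y i))
  -- Step 2: existence of limits on span × span
  have hspan : ∀ ξ ∈ s, ∀ ζ ∈ s,
      ∃ l : ℂ, Tendsto (fun n => (inner ℂ (V n ξ) ζ : ℂ)) atTop (nhds l) := by
    intro ξ hξ
    induction hξ using Submodule.span_induction with
    | mem ξ hξ =>
      obtain ⟨x, hx, rfl⟩ := hξ
      intro ζ hζ
      induction hζ using Submodule.span_induction with
      | mem ζ hζ =>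
        obtain ⟨y, hy, rfl⟩ := hζ
        have hxf := (hmemD x).mp hx
        have hyf := (hmemD y).mp hy
        refine ⟨_, helem x hx y hy (hxf.toFinset ∪ hyf.toFinset) ?_ ?_⟩
        · intro i hi; simp [Finset.coe_union, Set.Finite.coe_toFinset]; left; exact hi
        · intro i hi; simp [Finset.coe_union, Set.Finite.coe_toFinset]; right; exact hi
      | zero => exact ⟨0, by simpa using tendsto_const_nhds⟩
      | add ζ₁ ζ₂ h₁ h₂ ih₁ ih₂ =>
        obtain ⟨l₁, hl₁⟩ := ih₁
        obtain ⟨l₂, hl₂⟩ := ih₂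
        exact ⟨l₁ + l₂, by simpa [inner_add_right] using hl₁.add hl₂⟩
      | smul c ζ hζ ih =>
        obtain ⟨l, hl⟩ := ih
        exact ⟨c * l, by simpa [inner_smul_right] using hl.const_mul c⟩
    | zero => exact fun ζ hζ => ⟨0, by simpa using tendsto_const_nhds⟩
    | add ξ₁ ξ₂ h₁ h₂ ih₁ ih₂ =>
      intro ζ hζ
      obtain ⟨l₁, hl₁⟩ := ih₁ ζ hζ
      obtain ⟨l₂, hl₂⟩ := ih₂ ζ hζ
      exact ⟨l₁ + l₂, by simpa [map_add, inner_add_left] using hl₁.add hl₂⟩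
    | smul c ξ hξ ih =>
      intro ζ hζ
      obtain ⟨l, hl⟩ := ih ζ hζ
      refine ⟨(starRingEnd ℂ) c * l, ?_⟩
      simpa [map_smul, inner_smul_left, mul_comm] using hl.const_mul ((starRingEnd ℂ) c)
  -- Step 3: Cauchy for all pairs
  have hcauchy : ∀ ξ ζ : H, CauchySeq (fun n => (inner ℂ (V n ξ) ζ : ℂ)) := by
    intro ξ ζ
    rw [Metric.cauchySeq_iff]
    intro ε hε
    set X : ℝ := ‖ξ‖ + ‖ζ‖ with hX
    have hX0 : (0 : ℝ) ≤ X := by positivity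
    set δ : ℝ := min 1 (ε / (4 * (X + 2))) with hδ
    have hδ0 : 0 < δ := by
      apply lt_min one_pos
      positivity
    have hδ1 : δ ≤ 1 := min_le_left _ _
    have hδ2 : δ * (X + 2) ≤ ε / 4 := by
      have h1 : δ ≤ ε / (4 * (X + 2)) := min_le_right _ _
      have h2 : (0:ℝ) < X + 2 := by linarith
      calc δ * (X + 2) ≤ (ε / (4 * (X + 2))) * (X + 2) := by
            exact mul_le_mul_of_nonneg_right h1 (le_of_lt h2)
        _ = ε / 4 := by field_simp
    obtain ⟨ξ', hξ's, hξ'd⟩ := Metric.mem_closure_iff.mp (hdense ξ) δ hδ0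
    obtain ⟨ζ', hζ's, hζ'd⟩ := Metric.mem_closure_iff.mp (hdense ζ) δ hδ0
    obtain ⟨l, hl⟩ := hspan ξ' hξ's ζ' hζ's
    have hgC := hl.cauchySeq
    rw [Metric.cauchySeq_iff] at hgC
    obtain ⟨N, hN⟩ := hgC (ε / 4) (by positivity)
    refine ⟨N, fun m hm n hn => ?_⟩
    have hbd : ∀ p : ℕ, dist (inner ℂ (V p ξ) ζ : ℂ) (inner ℂ (V p ξ') ζ' : ℂ) ≤ ε / 4 := by
      intro p
      have hsplit : (inner ℂ (V p ξ) ζ : ℂ) - (inner ℂ (V p ξ') ζ' : ℂ)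
          = (inner ℂ (V p (ξ - ξ')) ζ : ℂ) + (inner ℂ (V p ξ') (ζ - ζ') : ℂ) := by
        rw [map_sub]
        simp only [inner_sub_left, inner_sub_right]
        ring
      rw [dist_eq_norm, hsplit]
      have h1 : ‖(inner ℂ (V p (ξ - ξ')) ζ : ℂ)‖ ≤ ‖ξ - ξ'‖ * ‖ζ‖ := by
        calc ‖(inner ℂ (V p (ξ - ξ')) ζ : ℂ)‖ ≤ ‖V p (ξ - ξ')‖ * ‖ζ‖ := norm_inner_le_norm _ _
          _ = ‖ξ - ξ'‖ * ‖ζ‖ := by rw [(V p).norm_map]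
      have h2 : ‖(inner ℂ (V p ξ') (ζ - ζ') : ℂ)‖ ≤ ‖ξ'‖ * ‖ζ - ζ'‖ := by
        calc ‖(inner ℂ (V p ξ') (ζ - ζ') : ℂ)‖ ≤ ‖V p ξ'‖ * ‖ζ - ζ'‖ := norm_inner_le_norm _ _
          _ = ‖ξ'‖ * ‖ζ - ζ'‖ := by rw [(V p).norm_map]
      have hξξ' : ‖ξ - ξ'‖ ≤ δ := by
        rw [← dist_eq_norm]; exact le_of_lt hξ'd
      have hζζ' : ‖ζ - ζ'‖ ≤ δ := by
        rw [← dist_eq_norm]; exact le_of_lt hζ'd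
      have hξ'n : ‖ξ'‖ ≤ ‖ξ‖ + δ := by
        calc ‖ξ'‖ ≤ ‖ξ‖ + ‖ξ' - ξ‖ := by
              have := norm_sub_norm_le ξ' ξ; linarith
          _ ≤ ‖ξ‖ + δ := by
              rw [norm_sub_rev]; linarith
      calc ‖(inner ℂ (V p (ξ - ξ')) ζ : ℂ) + (inner ℂ (V p ξ') (ζ - ζ') : ℂ)‖
          ≤ ‖(inner ℂ (V p (ξ - ξ')) ζ : ℂ)‖ + ‖(inner ℂ (V p ξ') (ζ - ζ') : ℂ)‖ := norm_add_le _ _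
        _ ≤ ‖ξ - ξ'‖ * ‖ζ‖ + ‖ξ'‖ * ‖ζ - ζ'‖ := by gcongr
        _ ≤ δ * ‖ζ‖ + (‖ξ‖ + δ) * δ := by
            have h0ζ : (0:ℝ) ≤ ‖ζ‖ := norm_nonneg _
            have h0ξ' : (0:ℝ) ≤ ‖ξ'‖ := norm_nonneg _
            have h0δ : (0:ℝ) ≤ δ := le_of_lt hδ0
            nlinarith [norm_nonneg (ξ - ξ'), norm_nonneg (ζ - ζ')]
        _ ≤ δ * (X + 2) := by
            have h0δ : (0:ℝ) ≤ δ := le_of_lt hδ0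
            have h0ξ : (0:ℝ) ≤ ‖ξ‖ := norm_nonneg _
            have h0ζ : (0:ℝ) ≤ ‖ζ‖ := norm_nonneg _
            nlinarith
        _ ≤ ε / 4 := hδ2
    calc dist (inner ℂ (V m ξ) ζ : ℂ) (inner ℂ (V n ξ) ζ : ℂ)
        ≤ dist (inner ℂ (V m ξ) ζ : ℂ) (inner ℂ (V m ξ') ζ' : ℂ)
          + dist (inner ℂ (V m ξ') ζ' : ℂ) (inner ℂ (V n ξ') ζ' : ℂ)
          + dist (inner ℂ (V n ξ') ζ' : ℂ) (inner ℂ (V n ξ) ζ : ℂ) := dist_triangle4 _ _ _ _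
      _ < ε / 4 + ε / 4 + ε / 4 := by
          have := hbd m
          have := hbd n
          have := hN m hm n hn
          rw [dist_comm (inner ℂ (V n ξ') ζ' : ℂ)]
          linarith
      _ < ε := by linarith
  -- Step 4: define the limit form B
  have hconv : ∀ ξ ζ : H, ∃ l : ℂ, Tendsto (fun n => (inner ℂ (V n ξ) ζ : ℂ)) atTop (nhds l) :=
    fun ξ ζ => cauchySeq_tendsto_of_complete (hcauchy ξ ζ)
  choose B hB using hconv
  -- properties of B
  have hBbound : ∀ ξ ζ : H, ‖B ξ ζ‖ ≤ ‖ξ‖ * ‖ζ‖ := by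
    intro ξ ζ
    refine le_of_tendsto (hB ξ ζ).norm (Eventually.of_forall fun n => ?_)
    calc ‖(inner ℂ (V n ξ) ζ : ℂ)‖ ≤ ‖V n ξ‖ * ‖ζ‖ := norm_inner_le_norm _ _
      _ = ‖ξ‖ * ‖ζ‖ := by rw [(V n).norm_map]
  have hBaddR : ∀ ξ ζ₁ ζ₂ : H, B ξ (ζ₁ + ζ₂) = B ξ ζ₁ + B ξ ζ₂ := by
    intro ξ ζ₁ ζ₂
    refine tendsto_nhds_unique (hB ξ (ζ₁ + ζ₂)) ?_
    simpa [inner_add_right] using (hB ξ ζ₁).add (hB ξ ζ₂)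
  have hBsmulR : ∀ (c : ℂ) (ξ ζ : H), B ξ (c • ζ) = c * B ξ ζ := by
    intro c ξ ζ
    refine tendsto_nhds_unique (hB ξ (c • ζ)) ?_
    simpa [inner_smul_right] using (hB ξ ζ).const_mul c
  have hBaddL : ∀ ξ₁ ξ₂ ζ : H, B (ξ₁ + ξ₂) ζ = B ξ₁ ζ + B ξ₂ ζ := by
    intro ξ₁ ξ₂ ζ
    refine tendsto_nhds_unique (hB (ξ₁ + ξ₂) ζ) ?_
    simpa [map_add, inner_add_left] using (hB ξ₁ ζ).add (hB ξ₂ ζ)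
  have hBsmulL : ∀ (c : ℂ) (ξ ζ : H), B (c • ξ) ζ = (starRingEnd ℂ) c * B ξ ζ := by
    intro c ξ ζ
    refine tendsto_nhds_unique (hB (c • ξ) ζ) ?_
    simpa [map_smul, inner_smul_left, mul_comm] using (hB ξ ζ).const_mul ((starRingEnd ℂ) c)
  -- the functionals
  set f : H → (H →L[ℂ] ℂ) := fun ξ =>
    LinearMap.mkContinuous
      { toFun := B ξ
        map_add' := hBaddR ξ
        map_smul' := fun c ζ => hBsmulR c ξ ζ }
      ‖ξ‖ (fun ζ => by simpa using hBbound ξ ζ) with hf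
  have hfapp : ∀ ξ ζ : H, f ξ ζ = B ξ ζ := fun ξ ζ => rfl
  have hfnorm : ∀ ξ : H, ‖f ξ‖ ≤ ‖ξ‖ := fun ξ =>
    LinearMap.mkContinuous_norm_le _ (norm_nonneg ξ) _
  set Tlin : H →ₗ[ℂ] H :=
    { toFun := fun ξ => (InnerProductSpace.toDual ℂ H).symm (f ξ)
      map_add' := by
        intro ξ₁ ξ₂
        have hfa : f (ξ₁ + ξ₂) = f ξ₁ + f ξ₂ := by
          apply ContinuousLinearMap.ext
          intro ζ
          simp only [ContinuousLinearMap.add_apply]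
          rw [hfapp, hfapp, hfapp, hBaddL]
        show (InnerProductSpace.toDual ℂ H).symm (f (ξ₁ + ξ₂))
          = (InnerProductSpace.toDual ℂ H).symm (f ξ₁)
            + (InnerProductSpace.toDual ℂ H).symm (f ξ₂)
        rw [hfa, map_add]
      map_smul' := by
        intro c ξ
        have hfs : f (c • ξ) = (starRingEnd ℂ) c • f ξ := by
          apply ContinuousLinearMap.ext
          intro ζ
          simp only [ContinuousLinearMap.smul_apply, smul_eq_mul]
          rw [hfapp, hfapp, hBsmulL]
        show (InnerProductSpace.toDual ℂ H).symm (f (c • ξ))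
          = (RingHom.id ℂ) c • (InnerProductSpace.toDual ℂ H).symm (f ξ)
        rw [hfs, LinearIsometryEquiv.map_smulₛₗ]
        simp }
    with hTlin
  have hTlinnorm : ∀ ξ : H, ‖Tlin ξ‖ ≤ 1 * ‖ξ‖ := by
    intro ξ
    rw [one_mul]
    calc ‖Tlin ξ‖ = ‖f ξ‖ := (InnerProductSpace.toDual ℂ H).symm.norm_map (f ξ)
      _ ≤ ‖ξ‖ := hfnorm ξ
  set T : H →L[ℂ] H := Tlin.mkContinuous 1 hTlinnorm with hT
  have hTinner : ∀ ξ ζ : H, (inner ℂ (T ξ) ζ : ℂ) = B ξ ζ := by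
    intro ξ ζ
    show (inner ℂ ((InnerProductSpace.toDual ℂ H).symm (f ξ)) ζ : ℂ) = B ξ ζ
    rw [InnerProductSpace.toDual_symm_apply]
    exact hfapp ξ ζ
  -- eigenvalue property on generators
  have hgen : ∀ (k : ℕ) (F : Finset ℕ), F.card = k → ∀ x ∈ D,
      (∀ i ∉ F, x i = e) → (∀ i ∈ F, (inner ℂ e (x i) : ℂ) = 0) →
      T (ι x) = ((2 : ℂ) ^ k)⁻¹ • ι x := by
    intro k F hF x hxD hxF hxO
    have hxsupp : {i : ℕ | x i ≠ e} ⊆ (F : Set ℕ) := by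
      intro i hi
      by_contra hiF
      exact hi (hxF i hiF)
    -- on elementary tensors
    have hE : ∀ y ∈ D, B (ι x) (ι y) = ((2 : ℂ) ^ k)⁻¹ * (inner ℂ (ι x) (ι y) : ℂ) := by
      intro y hyD
      have hyf := (hmemD y).mp hyD
      set S : Finset ℕ := F ∪ hyf.toFinset with hS
      have hFS : F ⊆ S := Finset.subset_union_left
      have hxS : {i : ℕ | x i ≠ e} ⊆ (S : Set ℕ) := by
        intro i hi
        exact Finset.mem_coe.mpr (hFS (hxsupp hi))
      have hyS : {i : ℕ | y i ≠ e} ⊆ (S : Set ℕ) := by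
        intro i hi
        apply Finset.mem_coe.mpr
        apply Finset.mem_union_right
        rwa [Set.Finite.mem_toFinset]
      have hlim := helem x hxD y hyD S hxS hyS
      have hval : ∏ i ∈ S, ℓ x y i
          = ((2 : ℂ) ^ k)⁻¹ * ∏ i ∈ S, (inner ℂ (x i) (y i) : ℂ) := by
        have hcong : ∀ i ∈ S, ℓ x y i
            = (if i ∈ F then (2 : ℂ)⁻¹ else 1) * (inner ℂ (x i) (y i) : ℂ) := by
          intro i _
          by_cases hiF : i ∈ F
          · have hxe : (inner ℂ (x i) e : ℂ) = 0 := by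
              rw [← inner_conj_symm, hxO i hiF, map_zero]
            simp only [hℓ, hxe, if_pos hiF]
            ring
          · have hxie : x i = e := hxF i hiF
            have hee : (inner ℂ e e : ℂ) = 1 := by
              rw [inner_self_eq_norm_sq_to_K, he]
              norm_num
            simp only [hℓ, hxie, hee, if_neg hiF]
            ring
        rw [Finset.prod_congr rfl hcong, Finset.prod_mul_distrib]
        congr 1
        have : ∏ i ∈ S, (if i ∈ F then (2 : ℂ)⁻¹ else 1)
            = ∏ i ∈ F, (if i ∈ F then (2 : ℂ)⁻¹ else 1) :=
          (Finset.prod_subset hFS (fun i _ hiF => if_neg hiF)).symm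
        rw [this, Finset.prod_congr rfl (fun i hi => if_pos hi), Finset.prod_const, hF,
          ← inv_pow]
      have : (inner ℂ (ι x) (ι y) : ℂ) = ∏ i ∈ S, (inner ℂ (x i) (y i) : ℂ) :=
        hinner x hxD y hyD S hxS hyS
      rw [this]
      refine tendsto_nhds_unique (hB (ι x) (ι y)) ?_
      rw [← hval]
      exact hlim
    -- extend to all ζ by density
    have hall : ∀ ζ : H, (inner ℂ (T (ι x)) ζ : ℂ)
        = (inner ℂ ((((2 : ℂ) ^ k)⁻¹ : ℂ) • ι x) ζ : ℂ) := by
      have hfun : ⇑(f (ι x)) = ⇑(((starRingEnd ℂ) (((2 : ℂ) ^ k)⁻¹)) • innerSL ℂ (ι x)) := by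
        apply Continuous.ext_on hdense (f (ι x)).continuous
          (((starRingEnd ℂ) (((2 : ℂ) ^ k)⁻¹)) • innerSL ℂ (ι x)).continuous
        have heqD : Set.EqOn (⇑(f (ι x)))
            (⇑(((starRingEnd ℂ) (((2 : ℂ) ^ k)⁻¹)) • innerSL ℂ (ι x))) (ι '' D) := by
          rintro _ ⟨y, hy, rfl⟩
          have hconj : (starRingEnd ℂ) (((2 : ℂ) ^ k)⁻¹) = ((2 : ℂ) ^ k)⁻¹ := by
            rw [map_inv₀, map_pow, Complex.conj_ofNat]
          simp only [ContinuousLinearMap.smul_apply, innerSL_apply_apply, smul_eq_mul, hconj]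
          rw [hfapp, hE y hy]
        intro z hz
        exact LinearMap.eqOn_span heqD hz
      intro ζ
      rw [hTinner, ← hfapp, inner_smul_left]
      have := congrFun hfun ζ
      simpa using this
    exact ext_inner_right ℂ (fun ζ => hall ζ)
  -- show L k ⊆ eigenspace
  refine ⟨T, ?_, ?_⟩
  · intro k ξ hξ
    set c : ℂ := ((2 : ℂ) ^ k)⁻¹ with hc
    set K : Submodule ℂ H := LinearMap.ker ((T - c • ContinuousLinearMap.id ℂ H : H →L[ℂ] H) : H →ₗ[ℂ] H) with hK
    have hKmem : ∀ η : H, η ∈ K ↔ T η = c • η := by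
      intro η
      rw [hK, LinearMap.mem_ker]
      constructor
      · intro h
        have : T η - c • η = 0 := by
          simpa [ContinuousLinearMap.sub_apply, ContinuousLinearMap.smul_apply,
            ContinuousLinearMap.id_apply] using h
        exact sub_eq_zero.mp this
      · intro h
        simp [ContinuousLinearMap.sub_apply, ContinuousLinearMap.smul_apply,
          ContinuousLinearMap.id_apply, h, sub_self]
    have hLK : L k ≤ K := by
      rw [hL k]
      apply Submodule.topologicalClosure_minimal
      · rw [Submodule.span_le]
        intro z hz
        simp only [Set.mem_iUnion] at hz
        obtain ⟨F, hF, hzF⟩ := hz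
        obtain ⟨x, hx, rfl⟩ := hzF
        obtain ⟨hxD, hxF, hxO⟩ := hx
        rw [SetLike.mem_coe, hKmem]
        exact hgen k F hF x hxD hxF hxO
      · exact ContinuousLinearMap.isClosed_ker _
    rw [← hKmem]
    exact hLK hξ
  · intro ξ ζ
    rw [hTinner]
    exact hB ξ ζ
end
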